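/- arXiv:2404.18079 — 2 statements merged into one kernel-verified Lean document; each statement's English description precedes it below -/
import Mathlib

section
/- Let φ ∈ C^∞(ℂ, ℝ) with ∂²φ/∂z∂z̄ ≤ −c everywhere for some constant c > 0. Then for every f ∈ C_c^∞(ℂ): ∫_ℂ |∂f/∂z̄ + (∂φ/∂z̄) f|² dm ≥ 2c ∫_ℂ |f|² dm. -/
open MeasureTheory

/-- Wirtinger derivative `∂g/∂z = (∂g/∂x − i ∂g/∂y)/2` of `g : ℂ → ℂ`. -/
noncomputable def wDz (g : ℂ → ℂ) (z : ℂ) : ℂ :=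
  (fderiv ℝ g z 1 - Complex.I * fderiv ℝ g z Complex.I) / 2

/-- Conjugate Wirtinger derivative `∂g/∂z̄ = (∂g/∂x + i ∂g/∂y)/2` of `g : ℂ → ℂ`. -/
noncomputable def wDzbar (g : ℂ → ℂ) (z : ℂ) : ℂ :=
  (fderiv ℝ g z 1 + Complex.I * fderiv ℝ g z Complex.I) / 2

section Helpers

lemma contDiff_fderiv_apply {g : ℂ → ℂ} (hg : ContDiff ℝ (⊤ : ℕ∞) g) (v : ℂ) :
    ContDiff ℝ (⊤ : ℕ∞) fun z => fderiv ℝ g z v :=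
  (hg.fderiv_right (by simp)).clm_apply contDiff_const

lemma contDiff_wDzbar {g : ℂ → ℂ} (hg : ContDiff ℝ (⊤ : ℕ∞) g) : ContDiff ℝ (⊤ : ℕ∞) (wDzbar g) := by
  unfold wDzbar
  exact ((contDiff_fderiv_apply hg 1).add
    (contDiff_const.mul (contDiff_fderiv_apply hg Complex.I))).div_const 2

lemma contDiff_wDz {g : ℂ → ℂ} (hg : ContDiff ℝ (⊤ : ℕ∞) g) : ContDiff ℝ (⊤ : ℕ∞) (wDz g) := by
  unfold wDz
  exact ((contDiff_fderiv_apply hg 1).sub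
    (contDiff_const.mul (contDiff_fderiv_apply hg Complex.I))).div_const 2

lemma contDiff_conj {g : ℂ → ℂ} (hg : ContDiff ℝ (⊤ : ℕ∞) g) :
    ContDiff ℝ (⊤ : ℕ∞) fun z => (starRingEnd ℂ) (g z) :=
  Complex.conjCLE.toContinuousLinearMap.contDiff.comp hg

lemma fderiv_mul_apply {u w : ℂ → ℂ} {z : ℂ} (hu : DifferentiableAt ℝ u z)
    (hw : DifferentiableAt ℝ w z) (v : ℂ) :
    fderiv ℝ (fun y => u y * w y) z v = fderiv ℝ u z v * w z + u z * fderiv ℝ w z v := by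
  rw [fderiv_fun_mul hu hw]
  simp [smul_eq_mul]
  ring

lemma fderiv_conj_apply {u : ℂ → ℂ} {z : ℂ} (hu : DifferentiableAt ℝ u z) (v : ℂ) :
    fderiv ℝ (fun y => (starRingEnd ℂ) (u y)) z v = (starRingEnd ℂ) (fderiv ℝ u z v) := by
  have h : HasFDerivAt (fun y => (starRingEnd ℂ) (u y))
      (Complex.conjCLE.toContinuousLinearMap.comp (fderiv ℝ u z)) z :=
    (Complex.conjCLE.toContinuousLinearMap.hasFDerivAt).comp z hu.hasFDerivAt
  rw [h.fderiv]
  rfl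

lemma differentiable_conj_comp {u : ℂ → ℂ} (hu : Differentiable ℝ u) :
    Differentiable ℝ fun y => (starRingEnd ℂ) (u y) := fun z =>
  ((Complex.conjCLE.toContinuousLinearMap.hasFDerivAt).comp z (hu z).hasFDerivAt).differentiableAt

lemma fderiv_fderiv_symm {g : ℂ → ℂ} (hg : ContDiff ℝ (⊤ : ℕ∞) g) (z v w : ℂ) :
    fderiv ℝ (fun y => fderiv ℝ g y v) z w = fderiv ℝ (fun y => fderiv ℝ g y w) z v := by
  have hF : ContDiff ℝ (⊤ : ℕ∞) (fderiv ℝ g) := hg.fderiv_right (by simp)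
  have hFz : HasFDerivAt (fderiv ℝ g) (fderiv ℝ (fderiv ℝ g) z) z :=
    (hF.differentiable (by simp) z).hasFDerivAt
  have key : ∀ a b : ℂ, fderiv ℝ (fun y => fderiv ℝ g y a) z b
      = fderiv ℝ (fderiv ℝ g) z b a := by
    intro a b
    have h : HasFDerivAt (fun y => fderiv ℝ g y a)
        ((ContinuousLinearMap.apply ℝ ℂ a).comp (fderiv ℝ (fderiv ℝ g) z)) z :=
      ((ContinuousLinearMap.apply ℝ ℂ a).hasFDerivAt).comp z hFz
    rw [h.fderiv]
    rfl
  rw [key v w, key w v]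
  exact second_derivative_symmetric (fun y => (hg.differentiable (by simp) y).hasFDerivAt) hFz w v

lemma fderiv_combo {a b : ℂ → ℂ} {z : ℂ} (c₂ : ℂ) (h1 : DifferentiableAt ℝ a z)
    (h2 : DifferentiableAt ℝ b z) (v : ℂ) :
    fderiv ℝ (fun y => (a y + c₂ * b y) / 2) z v
      = (fderiv ℝ a z v + c₂ * fderiv ℝ b z v) / 2 := by
  have hb : DifferentiableAt ℝ (fun y => c₂ * b y) z := h2.const_mul c₂
  have : (fun y => (a y + c₂ * b y) / 2) = fun y => (2⁻¹ : ℂ) * (a y + c₂ * b y) := by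
    funext y; ring
  rw [this, fderiv_const_mul (a := fun y => a y + c₂ * b y) (h1.add hb), fderiv_fun_add h1 hb, fderiv_const_mul h2]
  simp [smul_eq_mul]
  ring

lemma wDz_mul {u w : ℂ → ℂ} {z : ℂ} (hu : DifferentiableAt ℝ u z)
    (hw : DifferentiableAt ℝ w z) :
    wDz (fun y => u y * w y) z = wDz u z * w z + u z * wDz w z := by
  unfold wDz
  rw [fderiv_mul_apply hu hw, fderiv_mul_apply hu hw]
  ring

lemma wDzbar_mul {u w : ℂ → ℂ} {z : ℂ} (hu : DifferentiableAt ℝ u z)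
    (hw : DifferentiableAt ℝ w z) :
    wDzbar (fun y => u y * w y) z = wDzbar u z * w z + u z * wDzbar w z := by
  unfold wDzbar
  rw [fderiv_mul_apply hu hw, fderiv_mul_apply hu hw]
  ring

lemma wDz_conj {u : ℂ → ℂ} {z : ℂ} (hu : DifferentiableAt ℝ u z) :
    wDz (fun y => (starRingEnd ℂ) (u y)) z = (starRingEnd ℂ) (wDzbar u z) := by
  unfold wDz wDzbar
  rw [fderiv_conj_apply hu, fderiv_conj_apply hu]
  simp only [map_div₀, map_add, map_mul, Complex.conj_I, map_ofNat]
  ring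

lemma wDzbar_conj {u : ℂ → ℂ} {z : ℂ} (hu : DifferentiableAt ℝ u z) :
    wDzbar (fun y => (starRingEnd ℂ) (u y)) z = (starRingEnd ℂ) (wDz u z) := by
  unfold wDz wDzbar
  rw [fderiv_conj_apply hu, fderiv_conj_apply hu]
  simp only [map_div₀, map_add, map_sub, map_mul, Complex.conj_I, map_ofNat]
  ring

lemma wDz_wDzbar_comm {g : ℂ → ℂ} (hg : ContDiff ℝ (⊤ : ℕ∞) g) (z : ℂ) :
    wDz (wDzbar g) z = wDzbar (wDz g) z := by
  have d1 : DifferentiableAt ℝ (fun y => fderiv ℝ g y 1) z :=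
    (contDiff_fderiv_apply hg 1).differentiable (by simp) z
  have dI : DifferentiableAt ℝ (fun y => fderiv ℝ g y Complex.I) z :=
    (contDiff_fderiv_apply hg Complex.I).differentiable (by simp) z
  have hbar : wDzbar g = fun y => ((fun y => fderiv ℝ g y 1) y
      + Complex.I * (fun y => fderiv ℝ g y Complex.I) y) / 2 := rfl
  have hz : wDz g = fun y => ((fun y => fderiv ℝ g y 1) y
      + (-Complex.I) * (fun y => fderiv ℝ g y Complex.I) y) / 2 := by
    funext y; unfold wDz; ring
  conv_lhs => rw [hbar]
  conv_rhs => rw [hz]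
  unfold wDz wDzbar
  rw [fderiv_combo Complex.I d1 dI, fderiv_combo Complex.I d1 dI,
    fderiv_combo (-Complex.I) d1 dI, fderiv_combo (-Complex.I) d1 dI,
    fderiv_fderiv_symm hg z 1 Complex.I]
  ring

lemma hasCompactSupport_fderiv_apply {w : ℂ → ℂ} (hs : HasCompactSupport w) (v : ℂ) :
    HasCompactSupport fun z => fderiv ℝ w z v :=
  (hs.fderiv (𝕜 := ℝ)).comp_left (g := fun L : ℂ →L[ℝ] ℂ => L v) (by simp)

lemma hasCompactSupport_wDz {w : ℂ → ℂ} (hs : HasCompactSupport w) :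
    HasCompactSupport (wDz w) :=
  (hs.fderiv (𝕜 := ℝ)).comp_left
    (g := fun L : ℂ →L[ℝ] ℂ => (L 1 - Complex.I * L Complex.I) / 2) (by simp)

lemma hasCompactSupport_wDzbar {w : ℂ → ℂ} (hs : HasCompactSupport w) :
    HasCompactSupport (wDzbar w) :=
  (hs.fderiv (𝕜 := ℝ)).comp_left
    (g := fun L : ℂ →L[ℝ] ℂ => (L 1 + Complex.I * L Complex.I) / 2) (by simp)

lemma integrable_fderiv_apply {w : ℂ → ℂ} (hw : ContDiff ℝ (⊤ : ℕ∞) w)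
    (hs : HasCompactSupport w) (v : ℂ) :
    Integrable (fun z => fderiv ℝ w z v) volume :=
  ((contDiff_fderiv_apply hw v).continuous).integrable_of_hasCompactSupport
    (hasCompactSupport_fderiv_apply hs v)

lemma integral_fderiv_apply_eq_zero {w : ℂ → ℂ} (hw : ContDiff ℝ (⊤ : ℕ∞) w)
    (hs : HasCompactSupport w) (v : ℂ) : ∫ z : ℂ, fderiv ℝ w z v ∂volume = 0 := by
  have h := integral_mul_fderiv_eq_neg_fderiv_mul_of_integrable (μ := volume)
      (f := w) (g := fun _ => (1 : ℂ)) (v := v)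
      (by simpa using integrable_fderiv_apply hw hs v)
      (by simp [fderiv_fun_const])
      (by simpa using hw.continuous.integrable_of_hasCompactSupport hs)
      (fun x _ => hw.differentiable (by simp) x) (fun x _ => differentiableAt_const (1 : ℂ))
  simp only [fderiv_fun_const, Pi.zero_apply, ContinuousLinearMap.zero_apply, mul_zero, mul_one,
    integral_zero] at h
  rw [eq_comm, neg_eq_zero] at h
  exact h

lemma integral_wDz_eq_zero {w : ℂ → ℂ} (hw : ContDiff ℝ (⊤ : ℕ∞) w)
    (hs : HasCompactSupport w) : ∫ z : ℂ, wDz w z ∂volume = 0 := by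
  have hA := integrable_fderiv_apply hw hs 1
  have hB := integrable_fderiv_apply hw hs Complex.I
  have : ∫ z : ℂ, wDz w z ∂volume
      = ((∫ z : ℂ, fderiv ℝ w z 1 ∂volume)
        - Complex.I * ∫ z : ℂ, fderiv ℝ w z Complex.I ∂volume) / 2 := by
    unfold wDz
    rw [integral_div, integral_sub hA (hB.const_mul _), integral_const_mul]
  rw [this, integral_fderiv_apply_eq_zero hw hs 1,
    integral_fderiv_apply_eq_zero hw hs Complex.I]
  simp

lemma integral_wDzbar_eq_zero {w : ℂ → ℂ} (hw : ContDiff ℝ (⊤ : ℕ∞) w)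
    (hs : HasCompactSupport w) : ∫ z : ℂ, wDzbar w z ∂volume = 0 := by
  have hA := integrable_fderiv_apply hw hs 1
  have hB := integrable_fderiv_apply hw hs Complex.I
  have : ∫ z : ℂ, wDzbar w z ∂volume
      = ((∫ z : ℂ, fderiv ℝ w z 1 ∂volume)
        + Complex.I * ∫ z : ℂ, fderiv ℝ w z Complex.I ∂volume) / 2 := by
    unfold wDzbar
    rw [integral_div, integral_add hA (hB.const_mul _), integral_const_mul]
  rw [this, integral_fderiv_apply_eq_zero hw hs 1,
    integral_fderiv_apply_eq_zero hw hs Complex.I]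
  simp

lemma norm_sq_ofReal_eq_mul_conj (a : ℂ) :
    ((‖a‖ ^ 2 : ℝ) : ℂ) = a * (starRingEnd ℂ) a := by
  rw [Complex.mul_conj]
  norm_cast
  rw [Complex.sq_norm]

end Helpers

/-- if `φ ∈ C^∞(ℂ, ℝ)` has `∂²φ/∂z∂z̄ ≤ −c` everywhere (`c > 0`), then for
every `f ∈ C_c^∞(ℂ)` one has `∫ |∂f/∂z̄ + (∂φ/∂z̄) f|² dm ≥ 2c ∫ |f|² dm`. -/
theorem stmt4 (φ : ℂ → ℝ) (hφ : ContDiff ℝ (⊤ : ℕ∞) φ) (c : ℝ) (hc : 0 < c)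
    (hcurv : ∀ z : ℂ, (wDz (wDzbar (fun w => ((φ w : ℝ) : ℂ))) z).re ≤ -c)
    (f : ℂ → ℂ) (hf : ContDiff ℝ (⊤ : ℕ∞) f) (hsupp : HasCompactSupport f) :
    2 * c * ∫ z : ℂ, ‖f z‖ ^ 2 ∂volume
      ≤ ∫ z : ℂ, ‖wDzbar f z + wDzbar (fun w => ((φ w : ℝ) : ℂ)) z * f z‖ ^ 2 ∂volume := by
  set Φ : ℂ → ℂ := fun w => ((φ w : ℝ) : ℂ) with hΦdef
  have hΦ : ContDiff ℝ (⊤ : ℕ∞) Φ := by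
    rw [hΦdef]; exact Complex.ofRealCLM.contDiff.comp hφ
  set ψ : ℂ → ℂ := wDzbar Φ with hψdef
  have hψ : ContDiff ℝ (⊤ : ℕ∞) ψ := by rw [hψdef]; exact contDiff_wDzbar hΦ
  have hfd : Differentiable ℝ f := hf.differentiable (by simp)
  have hψd : Differentiable ℝ ψ := hψ.differentiable (by simp)
  -- the four "currents"
  set G₁ : ℂ → ℂ := fun y => wDzbar f y * (starRingEnd ℂ) (f y) with hG₁def
  set G₂ : ℂ → ℂ := fun y => wDz f y * (starRingEnd ℂ) (f y) with hG₂def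
  set G₃ : ℂ → ℂ := fun y => (starRingEnd ℂ) (ψ y) * (f y * (starRingEnd ℂ) (f y)) with hG₃def
  set G₄ : ℂ → ℂ := fun y => (starRingEnd ℂ) (G₃ y) with hG₄def
  have hcf : ContDiff ℝ (⊤ : ℕ∞) fun y => (starRingEnd ℂ) (f y) := contDiff_conj hf
  have hG₁s : ContDiff ℝ (⊤ : ℕ∞) G₁ := (contDiff_wDzbar hf).mul hcf
  have hG₂s : ContDiff ℝ (⊤ : ℕ∞) G₂ := (contDiff_wDz hf).mul hcf
  have hG₃s : ContDiff ℝ (⊤ : ℕ∞) G₃ := (contDiff_conj hψ).mul (hf.mul hcf)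
  have hG₄s : ContDiff ℝ (⊤ : ℕ∞) G₄ := contDiff_conj hG₃s
  have hscf : HasCompactSupport fun y => (starRingEnd ℂ) (f y) :=
    hsupp.comp_left (g := (starRingEnd ℂ)) (by simp)
  have hG₁c : HasCompactSupport G₁ := hscf.mul_left
  have hG₂c : HasCompactSupport G₂ := hscf.mul_left
  have hG₃c : HasCompactSupport G₃ := (hscf.mul_left (f := f)).mul_left
  have hG₄c : HasCompactSupport G₄ := hG₃c.comp_left (g := (starRingEnd ℂ)) (by simp)
  -- the pointwise Bochner–Kodaira identity
  have key : ∀ z : ℂ, wDz G₁ z - wDzbar G₂ z + wDzbar G₃ z + wDz G₄ z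
      = ((‖wDzbar f z + ψ z * f z‖ ^ 2 : ℝ) : ℂ)
        - ((‖-wDz f z + (starRingEnd ℂ) (ψ z) * f z‖ ^ 2 : ℝ) : ℂ)
        + ((2 * (wDz ψ z).re * ‖f z‖ ^ 2 : ℝ) : ℂ) := by
    intro z
    have df : DifferentiableAt ℝ f z := hfd z
    have dcf : DifferentiableAt ℝ (fun y => (starRingEnd ℂ) (f y)) z :=
      differentiable_conj_comp hfd z
    have du : DifferentiableAt ℝ (wDzbar f) z := (contDiff_wDzbar hf).differentiable (by simp) z
    have dv : DifferentiableAt ℝ (wDz f) z := (contDiff_wDz hf).differentiable (by simp) z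
    have dcψ : DifferentiableAt ℝ (fun y => (starRingEnd ℂ) (ψ y)) z :=
      differentiable_conj_comp hψd z
    have dfcf : DifferentiableAt ℝ (fun y => f y * (starRingEnd ℂ) (f y)) z := df.mul dcf
    have dG₃ : DifferentiableAt ℝ G₃ z := dcψ.mul dfcf
    have h1 : wDz G₁ z = wDz (wDzbar f) z * (starRingEnd ℂ) (f z)
        + wDzbar f z * wDz (fun y => (starRingEnd ℂ) (f y)) z := wDz_mul du dcf
    have h2 : wDzbar G₂ z = wDzbar (wDz f) z * (starRingEnd ℂ) (f z)
        + wDz f z * wDzbar (fun y => (starRingEnd ℂ) (f y)) z := wDzbar_mul dv dcf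
    have h3 : wDzbar G₃ z = wDzbar (fun y => (starRingEnd ℂ) (ψ y)) z
          * (f z * (starRingEnd ℂ) (f z))
        + (starRingEnd ℂ) (ψ z) * wDzbar (fun y => f y * (starRingEnd ℂ) (f y)) z :=
      wDzbar_mul dcψ dfcf
    have h3' : wDzbar (fun y => f y * (starRingEnd ℂ) (f y)) z
        = wDzbar f z * (starRingEnd ℂ) (f z)
          + f z * wDzbar (fun y => (starRingEnd ℂ) (f y)) z := wDzbar_mul df dcf
    have h4 : wDz G₄ z = (starRingEnd ℂ) (wDzbar G₃ z) := wDz_conj dG₃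
    rw [h1, h2, h3, h3', h4, h3, h3', wDz_conj df, wDzbar_conj df, wDzbar_conj hψd.differentiableAt,
      wDz_wDzbar_comm hf, norm_sq_ofReal_eq_mul_conj, norm_sq_ofReal_eq_mul_conj]
    have hre : ((2 * (wDz ψ z).re * ‖f z‖ ^ 2 : ℝ) : ℂ)
        = (wDz ψ z + (starRingEnd ℂ) (wDz ψ z)) * (f z * (starRingEnd ℂ) (f z)) := by
      rw [Complex.ofReal_mul, norm_sq_ofReal_eq_mul_conj, ← Complex.add_conj]
    rw [hre]
    simp only [map_add, map_mul, map_neg, Complex.conj_conj]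
    ring
  -- each current integrates to zero
  have E₁ : ∫ z : ℂ, wDz G₁ z ∂volume = 0 := integral_wDz_eq_zero hG₁s hG₁c
  have E₂ : ∫ z : ℂ, wDzbar G₂ z ∂volume = 0 := integral_wDzbar_eq_zero hG₂s hG₂c
  have E₃ : ∫ z : ℂ, wDzbar G₃ z ∂volume = 0 := integral_wDzbar_eq_zero hG₃s hG₃c
  have E₄ : ∫ z : ℂ, wDz G₄ z ∂volume = 0 := integral_wDz_eq_zero hG₄s hG₄c
  -- integrability of all pieces
  have I₁ : Integrable (fun z => wDz G₁ z) volume :=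
    (contDiff_wDz hG₁s).continuous.integrable_of_hasCompactSupport (hasCompactSupport_wDz hG₁c)
  have I₂ : Integrable (fun z => wDzbar G₂ z) volume :=
    (contDiff_wDzbar hG₂s).continuous.integrable_of_hasCompactSupport
      (hasCompactSupport_wDzbar hG₂c)
  have I₃ : Integrable (fun z => wDzbar G₃ z) volume :=
    (contDiff_wDzbar hG₃s).continuous.integrable_of_hasCompactSupport
      (hasCompactSupport_wDzbar hG₃c)
  have I₄ : Integrable (fun z => wDz G₄ z) volume :=
    (contDiff_wDz hG₄s).continuous.integrable_of_hasCompactSupport (hasCompactSupport_wDz hG₄c)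
  -- integrability of the three RHS pieces (real versions)
  have hLcont : Continuous fun z => wDzbar f z + ψ z * f z :=
    (contDiff_wDzbar hf).continuous.add (hψ.continuous.mul hf.continuous)
  have hLsupp : HasCompactSupport fun z => wDzbar f z + ψ z * f z :=
    (hasCompactSupport_wDzbar hsupp).add hsupp.mul_left
  have hMcont : Continuous fun z => -wDz f z + (starRingEnd ℂ) (ψ z) * f z :=
    (contDiff_wDz hf).continuous.neg.add ((contDiff_conj hψ).continuous.mul hf.continuous)
  have hnegsupp : HasCompactSupport fun z => -wDz f z :=
    (hasCompactSupport_wDz hsupp).comp_left (g := fun x : ℂ => -x) (by simp)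
  have hMsupp : HasCompactSupport fun z => -wDz f z + (starRingEnd ℂ) (ψ z) * f z :=
    hnegsupp.add hsupp.mul_left
  have JL : Integrable (fun z => (‖wDzbar f z + ψ z * f z‖ ^ 2 : ℝ)) volume :=
    ((hLcont.norm.pow 2).integrable_of_hasCompactSupport
      ((hLsupp.norm).comp_left (g := fun t : ℝ => t ^ 2) (by simp) :
        HasCompactSupport fun z => (‖wDzbar f z + ψ z * f z‖ ^ 2 : ℝ)))
  have JM : Integrable
      (fun z => (‖-wDz f z + (starRingEnd ℂ) (ψ z) * f z‖ ^ 2 : ℝ)) volume :=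
    ((hMcont.norm.pow 2).integrable_of_hasCompactSupport
      ((hMsupp.norm).comp_left (g := fun t : ℝ => t ^ 2) (by simp) :
        HasCompactSupport fun z => (‖-wDz f z + (starRingEnd ℂ) (ψ z) * f z‖ ^ 2 : ℝ)))
  have hf2supp : HasCompactSupport fun z => (‖f z‖ ^ 2 : ℝ) :=
    (hsupp.norm).comp_left (g := fun t : ℝ => t ^ 2) (by simp)
  have hf2 : Integrable (fun z => (‖f z‖ ^ 2 : ℝ)) volume :=
    (hf.continuous.norm.pow 2).integrable_of_hasCompactSupport hf2supp
  have JW : Integrable (fun z => (2 * (wDz ψ z).re * ‖f z‖ ^ 2 : ℝ)) volume :=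
    (((continuous_const.mul (Complex.continuous_re.comp (contDiff_wDz hψ).continuous)).mul
      (hf.continuous.norm.pow 2)).integrable_of_hasCompactSupport hf2supp.mul_left)
  -- total integral identity over ℂ
  have T0 : ((∫ z : ℂ, (‖wDzbar f z + ψ z * f z‖ ^ 2 : ℝ) ∂volume : ℝ) : ℂ)
      - ((∫ z : ℂ, (‖-wDz f z + (starRingEnd ℂ) (ψ z) * f z‖ ^ 2 : ℝ) ∂volume : ℝ) : ℂ)
      + ((∫ z : ℂ, (2 * (wDz ψ z).re * ‖f z‖ ^ 2 : ℝ) ∂volume : ℝ) : ℂ) = 0 := by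
    have cast1 : ∫ z : ℂ, ((‖wDzbar f z + ψ z * f z‖ ^ 2 : ℝ) : ℂ) ∂volume
        = ((∫ z : ℂ, (‖wDzbar f z + ψ z * f z‖ ^ 2 : ℝ) ∂volume : ℝ) : ℂ) := integral_ofReal
    have cast2 : ∫ z : ℂ, ((‖-wDz f z + (starRingEnd ℂ) (ψ z) * f z‖ ^ 2 : ℝ) : ℂ) ∂volume
        = ((∫ z : ℂ, (‖-wDz f z + (starRingEnd ℂ) (ψ z) * f z‖ ^ 2 : ℝ) ∂volume : ℝ) : ℂ) :=
      integral_ofReal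
    have cast3 : ∫ z : ℂ, ((2 * (wDz ψ z).re * ‖f z‖ ^ 2 : ℝ) : ℂ) ∂volume
        = ((∫ z : ℂ, (2 * (wDz ψ z).re * ‖f z‖ ^ 2 : ℝ) ∂volume : ℝ) : ℂ) := integral_ofReal
    have JLc : Integrable (fun z : ℂ => ((‖wDzbar f z + ψ z * f z‖ ^ 2 : ℝ) : ℂ)) volume :=
      JL.ofReal
    have JMc : Integrable
        (fun z : ℂ => ((‖-wDz f z + (starRingEnd ℂ) (ψ z) * f z‖ ^ 2 : ℝ) : ℂ)) volume :=
      JM.ofReal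
    have JWc : Integrable (fun z : ℂ => ((2 * (wDz ψ z).re * ‖f z‖ ^ 2 : ℝ) : ℂ)) volume :=
      JW.ofReal
    have JLM : Integrable (fun z : ℂ => ((‖wDzbar f z + ψ z * f z‖ ^ 2 : ℝ) : ℂ)
        - ((‖-wDz f z + (starRingEnd ℂ) (ψ z) * f z‖ ^ 2 : ℝ) : ℂ)) volume := JLc.sub JMc
    have split1 : ∫ z : ℂ, (((‖wDzbar f z + ψ z * f z‖ ^ 2 : ℝ) : ℂ)
          - ((‖-wDz f z + (starRingEnd ℂ) (ψ z) * f z‖ ^ 2 : ℝ) : ℂ)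
          + ((2 * (wDz ψ z).re * ‖f z‖ ^ 2 : ℝ) : ℂ)) ∂volume
        = (∫ z : ℂ, ((‖wDzbar f z + ψ z * f z‖ ^ 2 : ℝ) : ℂ) ∂volume)
          - (∫ z : ℂ, ((‖-wDz f z + (starRingEnd ℂ) (ψ z) * f z‖ ^ 2 : ℝ) : ℂ) ∂volume)
          + ∫ z : ℂ, ((2 * (wDz ψ z).re * ‖f z‖ ^ 2 : ℝ) : ℂ) ∂volume := by
      rw [integral_add JLM JWc, integral_sub JLc JMc]
    have I₁₂ : Integrable (fun z : ℂ => wDz G₁ z - wDzbar G₂ z) volume := I₁.sub I₂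
    have I₁₂₃ : Integrable (fun z : ℂ => wDz G₁ z - wDzbar G₂ z + wDzbar G₃ z) volume :=
      I₁₂.add I₃
    have split2 : ∫ z : ℂ, (wDz G₁ z - wDzbar G₂ z + wDzbar G₃ z + wDz G₄ z) ∂volume = 0 := by
      rw [integral_add I₁₂₃ I₄, integral_add I₁₂ I₃, integral_sub I₁ I₂, E₁, E₂, E₃, E₄]
      simp
    have eqfun : (fun z : ℂ => ((‖wDzbar f z + ψ z * f z‖ ^ 2 : ℝ) : ℂ)
          - ((‖-wDz f z + (starRingEnd ℂ) (ψ z) * f z‖ ^ 2 : ℝ) : ℂ)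
          + ((2 * (wDz ψ z).re * ‖f z‖ ^ 2 : ℝ) : ℂ))
        = fun z : ℂ => wDz G₁ z - wDzbar G₂ z + wDzbar G₃ z + wDz G₄ z :=
      funext fun z => (key z).symm
    rw [← cast1, ← cast2, ← cast3, ← split1]
    rw [show (∫ z : ℂ, (((‖wDzbar f z + ψ z * f z‖ ^ 2 : ℝ) : ℂ)
          - ((‖-wDz f z + (starRingEnd ℂ) (ψ z) * f z‖ ^ 2 : ℝ) : ℂ)
          + ((2 * (wDz ψ z).re * ‖f z‖ ^ 2 : ℝ) : ℂ)) ∂volume)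
        = ∫ z : ℂ, (wDz G₁ z - wDzbar G₂ z + wDzbar G₃ z + wDz G₄ z) ∂volume by rw [eqfun]]
    exact split2
  -- pass to the real identity
  have Treal : (∫ z : ℂ, (‖wDzbar f z + ψ z * f z‖ ^ 2 : ℝ) ∂volume)
      = (∫ z : ℂ, (‖-wDz f z + (starRingEnd ℂ) (ψ z) * f z‖ ^ 2 : ℝ) ∂volume)
        - ∫ z : ℂ, (2 * (wDz ψ z).re * ‖f z‖ ^ 2 : ℝ) ∂volume := by
    have h : ((∫ z : ℂ, (‖wDzbar f z + ψ z * f z‖ ^ 2 : ℝ) ∂volume : ℝ)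
        - (∫ z : ℂ, (‖-wDz f z + (starRingEnd ℂ) (ψ z) * f z‖ ^ 2 : ℝ) ∂volume : ℝ)
        + (∫ z : ℂ, (2 * (wDz ψ z).re * ‖f z‖ ^ 2 : ℝ) ∂volume : ℝ) : ℝ) = 0 := by
      exact_mod_cast T0
    linarith
  -- conclude
  have hMnonneg : 0 ≤ ∫ z : ℂ,
      (‖-wDz f z + (starRingEnd ℂ) (ψ z) * f z‖ ^ 2 : ℝ) ∂volume :=
    integral_nonneg fun z => by positivity
  have hmono : 2 * c * ∫ z : ℂ, ‖f z‖ ^ 2 ∂volume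
      ≤ - ∫ z : ℂ, (2 * (wDz ψ z).re * ‖f z‖ ^ 2 : ℝ) ∂volume := by
    rw [← integral_const_mul (2 * c), ← integral_neg]
    refine integral_mono (hf2.const_mul _) JW.neg fun z => ?_
    have h1 : (wDz ψ z).re ≤ -c := hcurv z
    have h2 : (0 : ℝ) ≤ ‖f z‖ ^ 2 := by positivity
    simp only [neg_mul]
    nlinarith
  calc 2 * c * ∫ z : ℂ, ‖f z‖ ^ 2 ∂volume
      ≤ - ∫ z : ℂ, (2 * (wDz ψ z).re * ‖f z‖ ^ 2 : ℝ) ∂volume := hmono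
    _ ≤ ∫ z : ℂ, (‖wDzbar f z + ψ z * f z‖ ^ 2 : ℝ) ∂volume := by
        rw [Treal]; linarith
end

section
/- Let H₀, H₁, H₂ be Hilbert spaces, D₀ : H₀ → H₁ and D₁ : H₁ → H₂ bounded linear maps with D₁ ∘ D₀ = 0. Suppose the Laplacians □₀ = D₀* D₀, □₁ = D₀ D₀* + D₁* D₁, □₂ = D₁ D₁* satisfy: □₀ and □₂ are bijective with bounded inverses N₀ and N₂. Then the operator B := Id − D₀ N₀ D₀* − D₁* N₂ D₁ is the orthogonal projection of H₁ onto ker □₁ = ker D₀* ∩ ker D₁. -/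
open ContinuousLinearMap

set_option maxHeartbeats 1000000 in
/-- bounded Hodge decomposition: with `D₁ ∘ D₀ = 0` and the Laplacians
`□₀ = D₀*D₀`, `□₂ = D₁D₁*` invertible with bounded inverses `N₀`, `N₂`, the operator
`B = Id − D₀N₀D₀* − D₁*N₂D₁` is the orthogonal projection of `H₁` onto
`ker □₁ = ker D₀* ∩ ker D₁`. -/
theorem stmt6 {H₀ H₁ H₂ : Type*}
    [NormedAddCommGroup H₀] [InnerProductSpace ℂ H₀] [CompleteSpace H₀]
    [NormedAddCommGroup H₁] [InnerProductSpace ℂ H₁] [CompleteSpace H₁]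
    [NormedAddCommGroup H₂] [InnerProductSpace ℂ H₂] [CompleteSpace H₂]
    (D₀ : H₀ →L[ℂ] H₁) (D₁ : H₁ →L[ℂ] H₂)
    (hDD : D₁.comp D₀ = 0)
    (N₀ : H₀ →L[ℂ] H₀) (N₂ : H₂ →L[ℂ] H₂)
    (hN₀l : ((adjoint D₀).comp D₀).comp N₀ = ContinuousLinearMap.id ℂ H₀)
    (hN₀r : N₀.comp ((adjoint D₀).comp D₀) = ContinuousLinearMap.id ℂ H₀)
    (hN₂l : (D₁.comp (adjoint D₁)).comp N₂ = ContinuousLinearMap.id ℂ H₂)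
    (hN₂r : N₂.comp (D₁.comp (adjoint D₁)) = ContinuousLinearMap.id ℂ H₂) :
    letI B : H₁ →L[ℂ] H₁ :=
      ContinuousLinearMap.id ℂ H₁ - (D₀.comp N₀).comp (adjoint D₀)
        - ((adjoint D₁).comp N₂).comp D₁
    IsSelfAdjoint B ∧ B.comp B = B ∧
      (∀ u : H₁, B u = u ↔ (adjoint D₀) u = 0 ∧ D₁ u = 0) ∧
      (∀ u : H₁, ((adjoint D₀) u = 0 ∧ D₁ u = 0) ↔
        (D₀.comp (adjoint D₀) + (adjoint D₁).comp D₁) u = 0) := by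
  set B : H₁ →L[ℂ] H₁ :=
    ContinuousLinearMap.id ℂ H₁ - (D₀.comp N₀).comp (adjoint D₀)
      - ((adjoint D₁).comp N₂).comp D₁ with hBdef
  -- pointwise versions of the hypotheses
  have hDD' : ∀ x : H₀, D₁ (D₀ x) = 0 := fun x => congrFun (congrArg DFunLike.coe hDD) x
  have hadj : ∀ x : H₂, adjoint D₀ (adjoint D₁ x) = 0 := by
    have : (adjoint D₀).comp (adjoint D₁) = 0 := by
      rw [← adjoint_comp, hDD]; simp
    exact fun x => congrFun (congrArg DFunLike.coe this) x
  have hL0 : ∀ x : H₀, adjoint D₀ (D₀ (N₀ x)) = x :=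
    fun x => congrFun (congrArg DFunLike.coe hN₀l) x
  have hR0 : ∀ x : H₀, N₀ (adjoint D₀ (D₀ x)) = x :=
    fun x => congrFun (congrArg DFunLike.coe hN₀r) x
  have hL2 : ∀ x : H₂, D₁ (adjoint D₁ (N₂ x)) = x :=
    fun x => congrFun (congrArg DFunLike.coe hN₂l) x
  have hR2 : ∀ x : H₂, N₂ (D₁ (adjoint D₁ x)) = x :=
    fun x => congrFun (congrArg DFunLike.coe hN₂r) x
  -- N₀, N₂ are self-adjoint
  have hN₀sa : adjoint N₀ = N₀ := by
    have hA : adjoint ((adjoint D₀).comp D₀) = (adjoint D₀).comp D₀ := by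
      rw [adjoint_comp, adjoint_adjoint]
    have h1 : (adjoint N₀).comp ((adjoint D₀).comp D₀) = ContinuousLinearMap.id ℂ H₀ := by
      rw [← hA, ← adjoint_comp, hN₀l, adjoint_id]
    calc adjoint N₀ = (adjoint N₀).comp (((adjoint D₀).comp D₀).comp N₀) := by
          rw [hN₀l, comp_id]
      _ = ((adjoint N₀).comp ((adjoint D₀).comp D₀)).comp N₀ := rfl
      _ = N₀ := by rw [h1, id_comp]
  have hN₂sa : adjoint N₂ = N₂ := by
    have hA : adjoint (D₁.comp (adjoint D₁)) = D₁.comp (adjoint D₁) := by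
      rw [adjoint_comp, adjoint_adjoint]
    have h1 : (adjoint N₂).comp (D₁.comp (adjoint D₁)) = ContinuousLinearMap.id ℂ H₂ := by
      rw [← hA, ← adjoint_comp, hN₂l, adjoint_id]
    calc adjoint N₂ = (adjoint N₂).comp ((D₁.comp (adjoint D₁)).comp N₂) := by
          rw [hN₂l, comp_id]
      _ = ((adjoint N₂).comp (D₁.comp (adjoint D₁))).comp N₂ := rfl
      _ = N₂ := by rw [h1, id_comp]
  have hBu : ∀ u : H₁, B u = u - D₀ (N₀ (adjoint D₀ u)) - adjoint D₁ (N₂ (D₁ u)) := by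
    intro u; rfl
  refine ⟨?_, ?_, ?_, ?_⟩
  · -- self-adjoint
    show adjoint B = B
    simp only [B, map_sub, adjoint_id, adjoint_comp, adjoint_adjoint, hN₀sa, hN₂sa]
    rw [comp_assoc, comp_assoc]
  · -- idempotent
    ext u
    rw [ContinuousLinearMap.comp_apply, hBu (B u), hBu u]
    simp only [map_sub, hDD', hadj, hL0, hL2, hR0, hR2, map_zero, sub_zero, zero_sub]
    abel
  · intro u
    constructor
    · intro hu
      rw [hBu u, sub_sub] at hu
      have h : D₀ (N₀ (adjoint D₀ u)) + adjoint D₁ (N₂ (D₁ u)) = 0 := sub_eq_self.mp hu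
      constructor
      · have h1 := congrArg (adjoint D₀) h
        simpa [map_add, hL0, hadj, map_zero] using h1
      · have h2 := congrArg D₁ h
        simpa [map_add, hDD', hL2, map_zero] using h2
    · rintro ⟨h1, h2⟩
      rw [hBu, h1, h2, map_zero, map_zero, map_zero, map_zero, sub_zero, sub_zero]
  · intro u
    constructor
    · rintro ⟨h1, h2⟩
      simp [h1, h2]
    · intro h
      have h' : D₀ (adjoint D₀ u) + adjoint D₁ (D₁ u) = 0 := h
      have hinner : (inner ℂ (D₀ (adjoint D₀ u) + adjoint D₁ (D₁ u)) u : ℂ) = 0 := by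
        rw [h', inner_zero_left]
      rw [inner_add_left, ← adjoint_inner_right D₀, adjoint_inner_left D₁] at hinner
      have hre := congrArg Complex.re hinner
      rw [Complex.add_re] at hre
      have ha : (inner ℂ (adjoint D₀ u) (adjoint D₀ u) : ℂ).re = ‖adjoint D₀ u‖ ^ 2 := by
        exact inner_self_eq_norm_sq (𝕜 := ℂ) _
      have hb : (inner ℂ (D₁ u) (D₁ u) : ℂ).re = ‖D₁ u‖ ^ 2 := by
        exact inner_self_eq_norm_sq (𝕜 := ℂ) _
      rw [ha, hb, Complex.zero_re] at hre
      have h1 : ‖adjoint D₀ u‖ = 0 := by nlinarith [norm_nonneg (adjoint D₀ u), norm_nonneg (D₁ u), sq_nonneg ‖adjoint D₀ u‖, sq_nonneg ‖D₁ u‖]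
      have h2 : ‖D₁ u‖ = 0 := by nlinarith [norm_nonneg (adjoint D₀ u), norm_nonneg (D₁ u)]
      exact ⟨norm_eq_zero.mp h1, norm_eq_zero.mp h2⟩
end
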